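/- arXiv:math/9812023 — 2 statements merged into one kernel-verified Lean document; each statement's English description precedes it below -/
import Mathlib

section
/- With the B^n_s recursion as above, B^n_{(0,1)} = ∑_{l=1}^{n-1} {l} for all n ≥ 2, where (0,1) is the sequence with s₀=0, s₁=1, all other entries 0, and {l} = l(c̃_{l-1} - w). -/
/-!
Since `(0,1)` has no `s₀`-entry, the recursion gives `B^n_{(0,1)} = ∑_{l<n} B^l_{(1)}`, where `(1)`
is the sequence with `s₀ = 1` only and `B^0_{(1)} = 0`. For `l ≥ 1` the recursion for `(1)` only sees
`∑_{m<l} B^m_0`, and `B^m_0 = 0` for `m ≥ 1`, so this sum is `B^0_0 = 1` and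
`B^l_{(1)} = l (c̃_{l-1} - w) = {l}`.
-/

/-- `c̃_j = c̃_0 - j·A₁`. -/
noncomputable def ctilde (c0 A1 : ℝ) (j : ℕ) : ℝ := c0 - (j : ℝ) * A1

/-- total `|s| = ∑ s_i`. -/
def totdeg (s : ℕ →₀ ℕ) : ℕ := s.sum fun _ v => v

/-- weighted `[s] = ∑ s_i (i+1)`. -/
def wdeg (s : ℕ →₀ ℕ) : ℕ := s.sum fun i v => v * (i + 1)

/-- `s - σ₀`: decrement `s₀` by one. -/
noncomputable def subσ₀ (s : ℕ →₀ ℕ) : ℕ →₀ ℕ := s.update 0 (s 0 - 1)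

/-- `s - σᵢ` for `i ≥ 1`: increment `s_{i-1}`, decrement `s_i`. -/
noncomputable def subσ (s : ℕ →₀ ℕ) (i : ℕ) : ℕ →₀ ℕ :=
  (s.update (i - 1) (s (i - 1) + 1)).update i (s i - 1)

/-- The recursion defining the numbers `B^n_s` (7.7). -/
def BRec (c0 A1 w : ℝ) (B : ℕ → (ℕ →₀ ℕ) → ℝ) : Prop :=
  B 0 0 = 1 ∧ (∀ s : ℕ →₀ ℕ, s ≠ 0 → B 0 s = 0) ∧
    ∀ n : ℕ, ∀ s : ℕ →₀ ℕ, 1 ≤ n →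
      B n s =
        (if s 0 = 0 then 0 else
          ((n + totdeg s - 1 : ℕ) : ℝ) * (ctilde c0 A1 (n + totdeg s - 2) - w) *
            ∑ l ∈ Finset.range n, B l (subσ₀ s))
        + ∑ i ∈ s.support.filter (fun i => 1 ≤ i),
            ((s (i - 1) : ℝ) + 1) * ∑ l ∈ Finset.range n, B l (subσ s i)

lemma totdeg_single (i k : ℕ) : totdeg (Finsupp.single i k) = k :=
  Finsupp.sum_single_index rfl

lemma subσ₀_single_zero (k : ℕ) : subσ₀ (Finsupp.single 0 k) = Finsupp.single 0 (k - 1) := by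
  ext a
  rcases eq_or_ne a 0 with rfl | ha
  · simp [subσ₀]
  · simp [subσ₀, Finsupp.update_apply, ha]

lemma subσ_single_succ (i : ℕ) :
    subσ (Finsupp.single (i + 1) 1) (i + 1) = Finsupp.single i 1 := by
  ext a
  rcases eq_or_ne a (i + 1) with rfl | ha
  · simp [subσ]
  · rcases eq_or_ne a i with rfl | ha'
    · simp [subσ, Finsupp.update_apply]
    · simp [subσ, Finsupp.update_apply, ha, ha']

namespace BRec

variable {c0 A1 w : ℝ} {B : ℕ → (ℕ →₀ ℕ) → ℝ}

lemma apply_zero_of_pos (hB : BRec c0 A1 w B) {m : ℕ} (hm : 1 ≤ m) : B m 0 = 0 := by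
  simp [hB.2.2 m 0 hm]

lemma sum_range_apply_zero (hB : BRec c0 A1 w B) {n : ℕ} (hn : 1 ≤ n) :
    ∑ m ∈ Finset.range n, B m 0 = 1 := by
  rw [Finset.sum_eq_single_of_mem 0 (Finset.mem_range.2 hn) fun m _ hm =>
    hB.apply_zero_of_pos (Nat.one_le_iff_ne_zero.2 hm)]
  exact hB.1

lemma apply_single_zero_one (hB : BRec c0 A1 w B) {n : ℕ} (hn : 1 ≤ n) :
    B n (Finsupp.single 0 1) = n * (ctilde c0 A1 (n - 1) - w) := by
  have hsupp : (Finsupp.single 0 1 : ℕ →₀ ℕ).support.filter (1 ≤ ·) = ∅ := by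
    simp [Finsupp.support_single]
  rw [hB.2.2 n _ hn, hsupp, totdeg_single, subσ₀_single_zero, Nat.sub_self,
    Finsupp.single_zero, hB.sum_range_apply_zero hn, Nat.add_sub_cancel,
    show n + 1 - 2 = n - 1 by omega]
  simp

lemma apply_single_succ_one (hB : BRec c0 A1 w B) {n : ℕ} (hn : 1 ≤ n) (i : ℕ) :
    B n (Finsupp.single (i + 1) 1) = ∑ l ∈ Finset.range n, B l (Finsupp.single i 1) := by
  have hsupp : (Finsupp.single (i + 1) 1 : ℕ →₀ ℕ).support.filter (1 ≤ ·) = {i + 1} := by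
    simp [Finsupp.support_single]
  rw [hB.2.2 n _ hn, hsupp, Finset.sum_singleton, subσ_single_succ]
  simp

end BRec

theorem stmt_10 (c0 A1 w : ℝ) (B : ℕ → (ℕ →₀ ℕ) → ℝ) (hB : BRec c0 A1 w B) :
    ∀ n : ℕ, 2 ≤ n →
      B n (Finsupp.single 1 1) =
        ∑ l ∈ Finset.Icc 1 (n - 1), (l : ℝ) * (ctilde c0 A1 (l - 1) - w) := by
  intro n hn
  have hIcc : Finset.Icc 1 (n - 1) = Finset.Ico 1 n := by
    ext l; simp only [Finset.mem_Icc, Finset.mem_Ico]; omega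
  rw [hB.apply_single_succ_one (by omega), Finset.range_eq_Ico,
    Finset.sum_eq_sum_Ico_succ_bot (by omega), hB.2.1 _ (by simp), zero_add, hIcc]
  exact Finset.sum_congr rfl fun l hl => hB.apply_single_zero_one (Finset.mem_Ico.1 hl).1
end

section
/- Let {n}(k) := n(k-n)·A₁ for a fixed real A₁ (this is {n} = n(c̃_{n-1}-w) evaluated at w = c̃_{k-1}). With the B^n_s recursion evaluated at w = c̃_{k-1}, one has B^n_{(n)}(2n) = [(2n-1)!!]²·A₁ⁿ for every n ≥ 1, where (n) is the sequence (n,0,0,…) and (2n-1)!! = 1·3·5···(2n-1). -/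
open Finset

lemma totdeg_single_zero (m : ℕ) : totdeg (Finsupp.single 0 m) = m := by
  simp [totdeg, Finsupp.sum_single_index]

lemma subσ₀_single_zero_succ (m : ℕ) :
    subσ₀ (Finsupp.single 0 (m + 1)) = Finsupp.single 0 m := by
  ext a
  simp only [subσ₀, Finsupp.coe_update, Function.update_apply, Finsupp.single_apply]
  split_ifs <;> omega

lemma filter_support_single_zero (m : ℕ) :
    (Finsupp.single (0 : ℕ) m).support.filter (fun i => 1 ≤ i) = ∅ := by
  refine filter_eq_empty_iff.mpr fun i hi => ?_
  rw [Finset.mem_singleton.mp (Finsupp.support_single_subset hi)]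
  omega

lemma ctilde_sub_ctilde (c0 A1 : ℝ) {i j : ℕ} (h : i ≤ j) :
    ctilde c0 A1 i - ctilde c0 A1 j = ((j - i : ℕ) : ℝ) * A1 := by
  rw [ctilde, ctilde, Nat.cast_sub h]
  ring

namespace BRec

variable {c0 A1 w : ℝ} {B : ℕ → (ℕ →₀ ℕ) → ℝ}

lemma apply_single_zero_succ (hB : BRec c0 A1 w B) {l : ℕ} (hl : 1 ≤ l) (m : ℕ) :
    B l (Finsupp.single 0 (m + 1)) =
      ((l + m : ℕ) : ℝ) * (ctilde c0 A1 (l + m - 1) - w) *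
        ∑ j ∈ range l, B j (Finsupp.single 0 m) := by
  rw [hB.2.2 l _ hl, filter_support_single_zero, sum_empty, add_zero, subσ₀_single_zero_succ,
    totdeg_single_zero, Finsupp.single_eq_same, if_neg m.succ_ne_zero,
    show l + (m + 1) - 1 = l + m by omega, show l + (m + 1) - 2 = l + m - 1 by omega]

lemma apply_single_zero_of_lt (hB : BRec c0 A1 w B) {l m : ℕ} (h : l < m) :
    B l (Finsupp.single 0 m) = 0 := by
  induction m generalizing l with
  | zero => omega
  | succ m ih =>
    rcases Nat.eq_zero_or_pos l with rfl | hl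
    · exact hB.2.1 _ (Finsupp.single_ne_zero.mpr m.succ_ne_zero)
    · rw [hB.apply_single_zero_succ hl,
        sum_eq_zero fun j hj => ih (by have := mem_range.mp hj; omega), mul_zero]

lemma apply_single_zero_self_succ (hB : BRec c0 A1 w B) (m : ℕ) :
    B (m + 1) (Finsupp.single 0 (m + 1)) =
      ((2 * m + 1 : ℕ) : ℝ) * (ctilde c0 A1 (2 * m) - w) * B m (Finsupp.single 0 m) := by
  rw [hB.apply_single_zero_succ (by omega), sum_range_succ,
    sum_eq_zero fun j hj => hB.apply_single_zero_of_lt (mem_range.mp hj), zero_add,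
    show m + 1 + m = 2 * m + 1 by omega, show 2 * m + 1 - 1 = 2 * m by omega]

lemma apply_single_zero_self (hB : BRec c0 A1 w B) (m : ℕ) :
    B m (Finsupp.single 0 m) =
      ∏ i ∈ range m, ((2 * i + 1 : ℕ) : ℝ) * (ctilde c0 A1 (2 * i) - w) := by
  induction m with
  | zero => simpa using hB.1
  | succ m ih => rw [hB.apply_single_zero_self_succ, ih, prod_range_succ, mul_comm]

end BRec

theorem stmt_13_general (c0 A1 : ℝ) (n : ℕ)
    (B : ℕ → (ℕ →₀ ℕ) → ℝ)
    (hB : BRec c0 A1 (ctilde c0 A1 (2 * n - 1)) B) :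
    B n (Finsupp.single 0 n) =
      (∏ i ∈ Finset.range n, ((2 * i + 1 : ℕ) : ℝ)) ^ 2 * A1 ^ n := by
  calc B n (Finsupp.single 0 n)
      = ∏ i ∈ range n, ((2 * i + 1 : ℕ) : ℝ) * (((2 * (n - 1 - i) + 1 : ℕ) : ℝ) * A1) := by
        refine hB.apply_single_zero_self n ▸ prod_congr rfl fun i hi => ?_
        have := mem_range.mp hi
        rw [ctilde_sub_ctilde c0 A1 (by omega : 2 * i ≤ 2 * n - 1)]
        congr 3
        omega
    _ = (∏ i ∈ range n, ((2 * i + 1 : ℕ) : ℝ)) ^ 2 * A1 ^ n := by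
        rw [prod_mul_distrib, prod_mul_distrib, prod_range_reflect (fun i => ((2 * i + 1 : ℕ) : ℝ)),
          prod_const, card_range]
        ring

/-- `B^n_{(n)}(2n) = ((2n-1)!!)² · A₁ⁿ`. -/
theorem stmt_13 (c0 A1 : ℝ) (n : ℕ) (hn : 1 ≤ n)
    (B : ℕ → (ℕ →₀ ℕ) → ℝ)
    (hB : BRec c0 A1 (ctilde c0 A1 (2 * n - 1)) B) :
    B n (Finsupp.single 0 n) =
      (∏ i ∈ Finset.range n, ((2 * i + 1 : ℕ) : ℝ)) ^ 2 * A1 ^ n :=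
  stmt_13_general c0 A1 n B hB
end
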